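/- Let H be a commutative bialgebra and A a commutative right H-comodule algebra. For invertible grouplike elements X, Y of A⊗H, the tensor product A^X ⊗_A A^Y of relative Hopf modules is isomorphic to A^{XY}, where XY is the product in the tensor product algebra A⊗H. Hence g : G^i(A⊗H) → Pic^H(A), g(X) = {A^X}, is a group homomorphism. -/

import Mathlib

open TensorProduct

universe u

/-- A commutative right `H`-comodule algebra: a commutative `k`-algebra `A` together with
a coassociative counital coaction `ρ : A → A ⊗ H` which is an algebra map. -/
structure ComodAlg (k H A : Type u) [CommRing k] [Ring H] [Bialgebra k H]
    [CommRing A] [Algebra k A] : Type u where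
  ρ : A →ₐ[k] A ⊗[k] H
  counit_comp : ∀ a : A,
    (TensorProduct.rid k A) ((LinearMap.lTensor A (Coalgebra.counit (R := k) (A := H))) (ρ a)) = a
  coassoc : ∀ a : A,
    (LinearMap.lTensor A (Coalgebra.comul (R := k) (A := H))) (ρ a)
      = (TensorProduct.assoc k A H H) ((LinearMap.rTensor H ρ.toLinearMap) (ρ a))

namespace ComodAlg

variable {k H A : Type u} [CommRing k] [Ring H] [Bialgebra k H]
  [CommRing A] [Algebra k A] (c : ComodAlg k H A)

/-- The subset of coinvariant elements `B = A^{co H}`. -/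
def coinvSet : Set A := {a : A | c.ρ a = a ⊗ₜ[k] 1}

/-- The coinvariants `B = A^{co H}` as a subalgebra of `A`. -/
def coinvAlg : Subalgebra k A where
  carrier := c.coinvSet
  mul_mem' {a} {b} ha hb := by
    simp only [coinvSet, Set.mem_setOf_eq] at *
    rw [map_mul, ha, hb, Algebra.TensorProduct.tmul_mul_tmul, mul_one]
  add_mem' {a} {b} ha hb := by
    simp only [coinvSet, Set.mem_setOf_eq] at *
    rw [map_add, ha, hb, ← add_tmul]
  algebraMap_mem' r := by
    simp only [coinvSet, Set.mem_setOf_eq, AlgHom.commutes,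
      Algebra.TensorProduct.algebraMap_apply]

end ComodAlg

namespace ComodAlg

variable {k H A : Type u} [CommRing k] [CommRing H] [Bialgebra k H]
  [CommRing A] [Algebra k A] (c : ComodAlg k H A)

/-- `Σ aᵢ ⊗ (hᵢ)₍₁₎ ⊗ (hᵢ)₍₂₎`, the comultiplication of the coring `A ⊗ H` applied to `x`,
written in `(A ⊗ H) ⊗ H` via the canonical identification `(A ⊗ H) ⊗_A (A ⊗ H) ≅ A ⊗ H ⊗ H`. -/
noncomputable def coact2 : A ⊗[k] H →ₗ[k] (A ⊗[k] H) ⊗[k] H :=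
  (TensorProduct.assoc k A H H).symm.toLinearMap ∘ₗ
    LinearMap.lTensor A (Coalgebra.comul (R := k) (A := H))

/-- `Σ_{i,j} aᵢ (a_j)₍₀₎ ⊗ hᵢ (a_j)₍₁₎ ⊗ h_j`, the image of `x ⊗_A x` under the canonical
identification `(A ⊗ H) ⊗_A (A ⊗ H) ≅ A ⊗ H ⊗ H`. -/
noncomputable def sqRHS (x : A ⊗[k] H) : (A ⊗[k] H) ⊗[k] H :=
  (LinearMap.rTensor H (LinearMap.mulLeft k x)) ((LinearMap.rTensor H c.ρ.toLinearMap) x)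

/-- `x` is a grouplike element of the `A`-coring `A ⊗ H`; equivalently, `x` is a
normalized Harrison 1-cocycle. -/
noncomputable def IsGrouplike (x : A ⊗[k] H) : Prop :=
  coact2 x = c.sqRHS x ∧
    (TensorProduct.rid k A) ((LinearMap.lTensor A (Coalgebra.counit (R := k) (A := H))) x) = 1

/-- The map `d : 𝔾ₘ(A) → Gⁱ(A ⊗ H)`, `d(a) = a⁻¹ a₍₀₎ ⊗ a₍₁₎`. -/
noncomputable def d (a : Aˣ) : A ⊗[k] H := (((↑a⁻¹ : A) ⊗ₜ[k] (1 : H)) : A ⊗[k] H) * c.ρ ↑a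

end ComodAlg

namespace ComodAlg

variable {k H A : Type u} [CommRing k] [CommRing H] [Bialgebra k H]
  [CommRing A] [Algebra k A]

/-- The canonical `k`-linear map `A ⊗[k] A → A ⊗[A] A`. -/
noncomputable def toTA : A ⊗[k] A →ₗ[k] A ⊗[A] A :=
  TensorProduct.lift (LinearMap.mk₂ k (fun a b => a ⊗ₜ[A] b)
    (fun a a' b => TensorProduct.add_tmul a a' b)
    (fun t a b => by simp [TensorProduct.smul_tmul'])
    (fun a b b' => TensorProduct.tmul_add a b b')
    (fun t a b => by simp [TensorProduct.tmul_smul]))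

/-- The tensor product coaction of two relative Hopf module structures on `A`, written at the
level of representatives: `(M ⊗ H) ⊗ (N ⊗ H) → (M ⊗_A N) ⊗ H`,
`(m ⊗ h) ⊗ (n ⊗ h') ↦ (m ⊗_A n) ⊗ hh'` for `M = N = A`. -/
noncomputable def psiA : (A ⊗[k] H) ⊗[k] (A ⊗[k] H) →ₗ[k] (A ⊗[A] A) ⊗[k] H :=
  (TensorProduct.map (toTA (k := k) (A := A)) (LinearMap.mul' k H)) ∘ₗ
    (TensorProduct.tensorTensorTensorComm k A H A H).toLinearMap

end ComodAlg

/-- Key computation: the composite `rTensor (lid) ∘ psiA` is just multiplication in `A ⊗ H`. -/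
lemma psiA_mul {k H A : Type u} [CommRing k] [CommRing H] [Bialgebra k H]
    [CommRing A] [Algebra k A] (u v : A ⊗[k] H) :
    (LinearMap.rTensor H (((TensorProduct.lid A A : A ⊗[A] A ≃ₗ[A] A) :
        A ⊗[A] A →ₗ[A] A).restrictScalars k))
      (ComodAlg.psiA (u ⊗ₜ[k] v)) = u * v := by
  induction u using TensorProduct.induction_on with
  | zero => simp
  | tmul a h =>
    induction v using TensorProduct.induction_on with
    | zero => simp
    | tmul a' h' =>
      simp [ComodAlg.psiA, ComodAlg.toTA, Algebra.TensorProduct.tmul_mul_tmul,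
        LinearMap.mul'_apply, smul_eq_mul]
      congr 1
    | add v1 v2 h1 h2 =>
      simp only [TensorProduct.tmul_add, map_add, h1, h2, mul_add]
  | add u1 u2 h1 h2 =>
    simp only [TensorProduct.add_tmul, map_add, h1, h2, add_mul]

/-- for invertible grouplike elements `X, Y` of `A ⊗ H`, the tensor product
`A^X ⊗_A A^Y` of relative Hopf modules (whose coaction sends `a ⊗ b` to
`Σ a₍₀₎ ⊗ b₍₀₎ ⊗ (X a₍₁₎)(Y b₍₁₎)`, computed here by `ψ ((X ρ(a)) ⊗ (Y ρ(b)))`) is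
isomorphic, as a relative Hopf module, to `A^{XY}`; hence `g : Gⁱ(A ⊗ H) → Pic^H(A)`,
`g(X) = {A^X}`, is a group homomorphism. -/

theorem AX_tensor_AY_iso_AXY
    {k H A : Type u} [CommRing k] [CommRing H] [Bialgebra k H]
    [CommRing A] [Algebra k A] (c : ComodAlg k H A) (X Y : (A ⊗[k] H)ˣ)
    (hX : c.IsGrouplike ↑X) (hY : c.IsGrouplike ↑Y) :
    ∃ F : (A ⊗[A] A) ≃ₗ[A] A, ∀ a b : A,
      ((↑X * ↑Y : A ⊗[k] H) * c.ρ (F (a ⊗ₜ[A] b))) =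
        (LinearMap.rTensor H ((F : A ⊗[A] A →ₗ[A] A).restrictScalars k))
          (ComodAlg.psiA (((↑X : A ⊗[k] H) * c.ρ a) ⊗ₜ[k] ((↑Y : A ⊗[k] H) * c.ρ b))) := by
  refine ⟨TensorProduct.lid A A, fun a b => ?_⟩
  rw [psiA_mul]
  have : (TensorProduct.lid A A) (a ⊗ₜ[A] b) = a * b := by
    simp [smul_eq_mul]
  rw [this, map_mul]
  ring
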